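/- arXiv:1505.03669 — 3 statements merged into one kernel-verified Lean document; each statement's English description precedes it below -/
import Mathlib

section
/- Let K be a field of characteristic 0 and F : K → K an additive operator satisfying F(xy) = a·xy + b·(x·F(y) + y·F(x)) + c·F(x)·F(y) for all x, y ∈ K with b² = b + ac. If c = 0 and F is not a scalar multiple of the identity (so b ≠ 0, hence b = 1), then the map d := F + a·Id is a derivation on K, i.e., d is additive and d(xy) = x·d(y) + y·d(x) for all x, y ∈ K. -/
/-- in characteristic 0, if `c = 0` and `F` is not a scalar multiple of
the identity, then `d = F + a·Id` is a derivation. -/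
theorem stmt2 {K : Type*} [Field K] [CharZero K] (F : K → K) (a b c : K)
    (hadd : ∀ x y : K, F (x + y) = F x + F y)
    (hmul : ∀ x y : K, F (x * y) = a * (x * y) + b * (x * F y + y * F x) + c * (F x * F y))
    (hb2 : b ^ 2 = b + a * c) (hc : c = 0)
    (hns : ¬ ∃ l : K, ∀ x : K, F x = l * x) :
    (∀ x y : K, F (x + y) + a * (x + y) = (F x + a * x) + (F y + a * y)) ∧
    (∀ x y : K, F (x * y) + a * (x * y) = x * (F y + a * y) + y * (F x + a * x)) := by
  subst hc
  have hb : b = 1 := by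
    have : b * (b - 1) = 0 := by ring_nf; linear_combination hb2
    rcases mul_eq_zero.mp this with h0 | h1
    · exfalso
      apply hns
      exact ⟨a, fun x => by have := hmul x 1; simpa [h0] using this⟩
    · exact sub_eq_zero.mp h1
  subst hb
  constructor
  · intro x y; rw [hadd]; ring
  · intro x y; rw [hmul]; ring
end

section
/- Let F be a field and D(F) the commutative F-algebra with generators e_0, e_1, e_2 satisfying 1 = e_0 + e_2, e_0² = e_0, e_2² = e_2, e_1² = 0, e_0·e_1 = e_1, e_0·e_2 = 0, e_1·e_2 = 0. Then the only maximal ideals of D(F) are m_0 = (e_1, e_2) and m_1 = (e_0, e_1), and (m_0·m_1)² = 0. -/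
/-- for the difference-differential algebra on `e₀, e₁, e₂`, the only
maximal ideals are `(e₁, e₂)` and `(e₀, e₁)`, and `(m₀·m₁)² = 0`. -/
theorem stmt8 {F B : Type*} [Field F] [CommRing B] [Algebra F B]
    (e0 e1 e2 : B) (hli : LinearIndependent F ![e0, e1, e2])
    (hsp : Submodule.span F {e0, e1, e2} = ⊤)
    (h1 : e0 + e2 = 1) (h00 : e0 * e0 = e0) (h22 : e2 * e2 = e2) (h11 : e1 * e1 = 0)
    (h01 : e0 * e1 = e1) (h02 : e0 * e2 = 0) (h12 : e1 * e2 = 0) :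
    (∀ I : Ideal B, I.IsMaximal ↔ (I = Ideal.span {e1, e2} ∨ I = Ideal.span {e0, e1})) ∧
    (Ideal.span {e1, e2} * Ideal.span {e0, e1}) ^ 2 = ⊥ := by
  -- representation of any element
  have repr : ∀ x : B, ∃ a b c : F, x = a • e0 + b • e1 + c • e2 := by
    intro x
    have hx : x ∈ Submodule.span F ({e0, e1, e2} : Set B) := by rw [hsp]; trivial
    rw [show ({e0, e1, e2} : Set B) = insert e0 (insert e1 {e2}) from rfl,
      Submodule.mem_span_insert] at hx
    obtain ⟨a, z, hz, hxz⟩ := hx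
    rw [Submodule.mem_span_insert] at hz
    obtain ⟨b, w, hw, hzw⟩ := hz
    rw [Submodule.mem_span_singleton] at hw
    obtain ⟨c, hc⟩ := hw
    exact ⟨a, b, c, by rw [hxz, hzw, ← hc]; ring⟩
  have uniq : ∀ a b c : F, a • e0 + b • e1 + c • e2 = 0 → a = 0 ∧ b = 0 ∧ c = 0 := by
    intro a b c h
    have := Fintype.linearIndependent_iff.mp hli ![a, b, c] (by
      simpa [Fin.sum_univ_three] using h)
    exact ⟨this 0, this 1, this 2⟩
  -- membership characterizations
  have mem_m0 : ∀ x : B, x ∈ Ideal.span ({e1, e2} : Set B) ↔ ∃ b c : F, x = b • e1 + c • e2 := by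
    intro x
    constructor
    · intro hx
      rw [Ideal.mem_span_pair] at hx
      obtain ⟨u, v, huv⟩ := hx
      obtain ⟨a0, a1, a2, hu⟩ := repr u
      obtain ⟨b0, b1, b2, hv⟩ := repr v
      refine ⟨a0, b2, ?_⟩
      rw [← huv, hu, hv]
      have h21 : e2 * e1 = 0 := by rw [mul_comm]; rw [h12]
      have h20 : e2 * e0 = 0 := by rw [mul_comm]; exact h02
      simp only [add_mul, smul_mul_assoc, h01, h11, h21, h22, h12, mul_comm e2 e1,
        mul_comm e0 e2, h02, h20]
      simp [mul_comm e1 e2, h12]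
    · rintro ⟨b, c, rfl⟩
      exact add_mem (Submodule.smul_of_tower_mem _ b
        (Ideal.subset_span (by simp))) (Submodule.smul_of_tower_mem _ c
        (Ideal.subset_span (by simp)))
  have mem_m1 : ∀ x : B, x ∈ Ideal.span ({e0, e1} : Set B) ↔ ∃ a b : F, x = a • e0 + b • e1 := by
    intro x
    constructor
    · intro hx
      rw [Ideal.mem_span_pair] at hx
      obtain ⟨u, v, huv⟩ := hx
      obtain ⟨a0, a1, a2, hu⟩ := repr u
      obtain ⟨b0, b1, b2, hv⟩ := repr v
      refine ⟨a0, a1 + b0, ?_⟩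
      rw [← huv, hu, hv]
      have h10 : e1 * e0 = e1 := by rw [mul_comm]; exact h01
      have h20 : e2 * e0 = 0 := by rw [mul_comm]; exact h02
      have h21 : e2 * e1 = 0 := by rw [mul_comm]; exact h12
      simp only [add_mul, smul_mul_assoc, h00, h10, h20, h01, h11, h21]
      simp [add_smul]
      abel
    · rintro ⟨a, b, rfl⟩
      exact add_mem (Submodule.smul_of_tower_mem _ a
        (Ideal.subset_span (by simp))) (Submodule.smul_of_tower_mem _ b
        (Ideal.subset_span (by simp)))
  -- properness
  have one_not_m0 : (1 : B) ∉ Ideal.span ({e1, e2} : Set B) := by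
    intro h
    obtain ⟨b, c, hbc⟩ := (mem_m0 1).mp h
    have : (1 : F) • e0 + (-b) • e1 + (1 - c) • e2 = 0 := by
      rw [one_smul, neg_smul, sub_smul, one_smul]
      rw [← h1] at hbc
      rw [← sub_eq_zero] at hbc
      rw [← hbc]; ring
    exact one_ne_zero (uniq _ _ _ this).1
  have one_not_m1 : (1 : B) ∉ Ideal.span ({e0, e1} : Set B) := by
    intro h
    obtain ⟨a, b, hab⟩ := (mem_m1 1).mp h
    have : (1 - a) • e0 + (-b) • e1 + (1 : F) • e2 = 0 := by
      rw [one_smul, neg_smul, sub_smul, one_smul]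
      rw [← h1] at hab
      rw [← sub_eq_zero] at hab
      rw [← hab]; ring
    exact one_ne_zero (uniq _ _ _ this).2.2
  -- scalar cancellation helper: a ≠ 0, a • y ∈ J → y ∈ J
  have smul_cancel : ∀ (J : Ideal B) (a : F) (y : B), a ≠ 0 → a • y ∈ J → y ∈ J := by
    intro J a y ha hy
    have : y = algebraMap F B a⁻¹ * (a • y) := by
      rw [Algebra.smul_def, ← mul_assoc, ← map_mul, inv_mul_cancel₀ ha, map_one, one_mul]
    rw [this]
    exact J.mul_mem_left _ hy
  -- maximality of m0
  have hm0 : (Ideal.span ({e1, e2} : Set B)).IsMaximal := by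
    rw [Ideal.isMaximal_iff]
    refine ⟨one_not_m0, ?_⟩
    intro J x hle hx hxJ
    obtain ⟨a, b, c, hrep⟩ := repr x
    have ha : a ≠ 0 := by
      rintro rfl
      exact hx ((mem_m0 x).mpr ⟨b, c, by rw [hrep]; simp⟩)
    have he1 : e1 ∈ J := hle (Ideal.subset_span (by simp))
    have he2 : e2 ∈ J := hle (Ideal.subset_span (by simp))
    have hx0 : e0 * x = a • e0 + b • e1 := by
      rw [hrep]
      simp only [mul_add, mul_smul_comm, h00, h01, h02, smul_zero, add_zero]
    have hae0 : a • e0 ∈ J := by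
      have h2 : e0 * x ∈ J := J.mul_mem_left _ hxJ
      rw [hx0] at h2
      have := J.sub_mem h2 (Submodule.smul_of_tower_mem _ b he1)
      simpa using this
    have he0 : e0 ∈ J := smul_cancel J a e0 ha hae0
    rw [← h1]
    exact J.add_mem he0 he2
  -- maximality of m1
  have hm1 : (Ideal.span ({e0, e1} : Set B)).IsMaximal := by
    rw [Ideal.isMaximal_iff]
    refine ⟨one_not_m1, ?_⟩
    intro J x hle hx hxJ
    obtain ⟨a, b, c, hrep⟩ := repr x
    have hc : c ≠ 0 := by
      rintro rfl
      exact hx ((mem_m1 x).mpr ⟨a, b, by rw [hrep]; simp⟩)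
    have he0 : e0 ∈ J := hle (Ideal.subset_span (by simp))
    have he1 : e1 ∈ J := hle (Ideal.subset_span (by simp))
    have h20 : e2 * e0 = 0 := by rw [mul_comm]; exact h02
    have h21 : e2 * e1 = 0 := by rw [mul_comm]; exact h12
    have hx2 : e2 * x = c • e2 := by
      rw [hrep]
      simp only [mul_add, mul_smul_comm, h20, h21, h22, smul_zero, zero_add]
    have hce2 : c • e2 ∈ J := by
      have h2 : e2 * x ∈ J := J.mul_mem_left _ hxJ
      rwa [hx2] at h2
    have he2 : e2 ∈ J := smul_cancel J c e2 hc hce2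
    rw [← h1]
    exact J.add_mem he0 he2
  constructor
  · intro I
    constructor
    · intro hI
      have hprime : I.IsPrime := hI.isPrime
      have he1 : e1 ∈ I := by
        rcases hprime.mem_or_mem (show e1 * e1 ∈ I by rw [h11]; exact I.zero_mem) with h | h
        · exact h
        · exact h
      rcases hprime.mem_or_mem (show e0 * e2 ∈ I by rw [h02]; exact I.zero_mem) with h | h
      · right
        have hle : Ideal.span ({e0, e1} : Set B) ≤ I := by
          rw [Ideal.span_le]
          rintro x (rfl | rfl) <;> assumption
        exact (hm1.eq_of_le hI.ne_top hle).symm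
      · left
        have hle : Ideal.span ({e1, e2} : Set B) ≤ I := by
          rw [Ideal.span_le]
          rintro x (rfl | rfl) <;> assumption
        exact (hm0.eq_of_le hI.ne_top hle).symm
    · rintro (rfl | rfl)
      · exact hm0
      · exact hm1
  · rw [eq_bot_iff]
    have hle : Ideal.span ({e1, e2} : Set B) * Ideal.span ({e0, e1} : Set B)
        ≤ Ideal.span ({e1} : Set B) := by
      rw [Ideal.span_mul_span']
      rw [Ideal.span_le]
      rintro x hx
      rw [Set.mem_mul] at hx
      obtain ⟨p, hp, q, hq, rfl⟩ := hx
      have h10 : e1 * e0 = e1 := by rw [mul_comm]; exact h01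
      have h20 : e2 * e0 = 0 := by rw [mul_comm]; exact h02
      have h21 : e2 * e1 = 0 := by rw [mul_comm]; exact h12
      rcases hp with rfl | rfl <;> rcases hq with rfl | rfl <;>
        simp [h10, h11, h20, h21, Ideal.mem_span_singleton_self]
    calc (Ideal.span ({e1, e2} : Set B) * Ideal.span ({e0, e1} : Set B)) ^ 2
        ≤ Ideal.span ({e1} : Set B) ^ 2 := by
          rw [pow_two, pow_two]; exact Ideal.mul_mono hle hle
      _ = ⊥ := by
          rw [pow_two, Ideal.span_mul_span']
          simp [h11]
end

section
/- Let K be a field with two commuting additive maps where an element c satisfies: the only algebraic relations among the words θ(c) (θ ranging over reduced words in σ_1, σ_2, σ_1⁻¹, σ_2⁻¹) are those induced by σ_1(σ_2^l(c)) = σ_2^l(c) for all l ∈ ℤ. Then the transcendence degree function f_c(r) = trdeg(Θ_r(c)) satisfies f_c(r) = 2r + 1 for all r ≥ 0. -/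
/-!
The first generator fixes every `σ₂^l c`, so acting by a word `g` just shifts the orbit
`l ↦ σ₂^l c` by the exponent sum of `σ₂` in `g`; hence `g c = σ₂^(e g) c` with
`|e g| ≤ |g|`. Thus `Θ_r(c)` is exactly `{σ₂^l c : |l| ≤ r}`, which by hypothesis consists of
`2r + 1` distinct, algebraically independent elements.
-/

namespace FreeGroup

variable {ι : Type*} [DecidableEq ι]

def exponentSum (i : ι) : FreeGroup ι →* Multiplicative ℤ :=
  lift (Pi.mulSingle i (Multiplicative.ofAdd 1))

@[simp]
theorem toAdd_exponentSum_of_self (i : ι) : (exponentSum i (of i)).toAdd = 1 := by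
  simp [exponentSum]

theorem exponentSum_of_of_ne {i j : ι} (h : j ≠ i) : exponentSum i (of j) = 1 := by
  simp [exponentSum, h]

theorem abs_toAdd_exponentSum_mk_singleton_le_one (i : ι) (a : ι × Bool) :
    |(exponentSum i (mk [a])).toAdd| ≤ 1 := by
  obtain ⟨j, b⟩ := a
  by_cases h : j = i <;> cases b <;> simp [exponentSum, lift_mk, h]

theorem abs_toAdd_exponentSum_mk_le (i : ι) (L : List (ι × Bool)) :
    |(exponentSum i (mk L)).toAdd| ≤ L.length := by
  induction L with
  | nil => simp [← one_eq_mk]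
  | cons a L ih =>
    rw [← List.singleton_append, ← mul_mk, _root_.map_mul, toAdd_mul, List.length_append,
      List.length_singleton, Nat.cast_add, Nat.cast_one]
    linarith [abs_add_le (exponentSum i (mk [a])).toAdd (exponentSum i (mk L)).toAdd,
      abs_toAdd_exponentSum_mk_singleton_le_one i a]

theorem abs_toAdd_exponentSum_le_norm (i : ι) (g : FreeGroup ι) :
    |(exponentSum i g).toAdd| ≤ g.norm := by
  have h := abs_toAdd_exponentSum_mk_le i g.toWord
  rwa [mk_toWord] at h

theorem norm_of_zpow (a : ι) (n : ℤ) : norm (of a ^ n) = n.natAbs := by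
  obtain ⟨n, rfl | rfl⟩ := Int.eq_nat_or_neg n
  · simp [norm_of_pow]
  · simp [zpow_neg, norm_inv_eq, norm_of_pow]

section Action

variable {G X : Type*} [Group G] [MulAction G X] (σ : FreeGroup ι →* G) (i : ι) (c : X)

theorem smul_eq_zpow_exponentSum_smul
    (hfix : ∀ j ≠ i, ∀ l : ℤ, σ (of j) • σ (of i ^ l) • c = σ (of i ^ l) • c) (g : FreeGroup ι) :
    σ g • c = σ (of i ^ (exponentSum i g).toAdd) • c := by
  have shift : ∀ l : ℤ,
      σ g • σ (of i ^ l) • c = σ (of i ^ ((exponentSum i g).toAdd + l)) • c := by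
    induction g using FreeGroup.induction_on with
    | C1 => simp
    | of j =>
      intro l
      by_cases h : j = i
      · subst h
        rw [toAdd_exponentSum_of_self, zpow_one_add, _root_.map_mul, mul_smul]
      · rw [exponentSum_of_of_ne h, toAdd_one, zero_add, hfix j h]
    | inv_of j ih =>
      intro l
      rw [_root_.map_inv, inv_smul_eq_iff, ih, _root_.map_inv, toAdd_inv, add_neg_cancel_left]
    | mul g h ihg ihh =>
      intro l
      rw [_root_.map_mul, mul_smul, ihh, ihg, _root_.map_mul, toAdd_mul, add_assoc]
  simpa using shift 0

theorem setOf_norm_le_smul_eq_image_Icc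
    (hfix : ∀ j ≠ i, ∀ l : ℤ, σ (of j) • σ (of i ^ l) • c = σ (of i ^ l) • c) (r : ℕ) :
    {x | ∃ g : FreeGroup ι, g.toWord.length ≤ r ∧ x = σ g • c} =
      (fun l : ℤ => σ (of i ^ l) • c) '' Set.Icc (-r) r := by
  ext x
  constructor
  · rintro ⟨g, hg, rfl⟩
    have hle := abs_toAdd_exponentSum_le_norm i g
    refine ⟨(exponentSum i g).toAdd, Set.mem_Icc.mpr (abs_le.mp (hle.trans ?_)),
      (smul_eq_zpow_exponentSum_smul σ i c hfix g).symm⟩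
    exact_mod_cast hg
  · rintro ⟨l, ⟨hlo, hhi⟩, rfl⟩
    refine ⟨of i ^ l, ?_, rfl⟩
    change (of i ^ l).norm ≤ r
    have := norm_of_zpow i l
    omega

end Action

end FreeGroup

/-- if the only algebraic relations among the words `θ(c)` (for reduced
words `θ` in `σ₁^{±1}, σ₂^{±1}`) are those induced by `σ₁(σ₂^l(c)) = σ₂^l(c)`, then the
transcendence degree of the set `Θ_r(c)` of values of words of length at most `r` equals
`2r + 1`: it contains an algebraically independent subset of size `2r + 1` over which
every element of `Θ_r(c)` is algebraic. -/
theorem stmt14 {F K : Type*} [Field F] [Field K] [Algebra F K]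
    (σ : FreeGroup (Fin 2) →* (K ≃ₐ[F] K)) (c : K)
    (hrel : ∀ l : ℤ, σ (FreeGroup.of 0) (σ (FreeGroup.of 1 ^ l) c) = σ (FreeGroup.of 1 ^ l) c)
    (hind : AlgebraicIndependent F (fun l : ℤ => σ (FreeGroup.of 1 ^ l) c)) :
    ∀ r : ℕ, ∃ s : Finset K,
      (↑s : Set K) ⊆ {x | ∃ g : FreeGroup (Fin 2), (FreeGroup.toWord g).length ≤ r ∧ x = σ g c} ∧
      s.card = 2 * r + 1 ∧
      AlgebraicIndependent F (fun x : s => (x : K)) ∧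
      ∀ x ∈ {x | ∃ g : FreeGroup (Fin 2), (FreeGroup.toWord g).length ≤ r ∧ x = σ g c},
        IsAlgebraic (Algebra.adjoin F (↑s : Set K)) x := by
  intro r
  classical
  set f : ℤ → K := fun l => σ (FreeGroup.of 1 ^ l) c
  have hfix : ∀ j ≠ 1, ∀ l : ℤ, σ (FreeGroup.of j) • f l = f l := by
    intro j hj l
    obtain rfl : j = 0 := by omega
    exact hrel l
  have hball := FreeGroup.setOf_norm_le_smul_eq_image_Icc σ 1 c hfix r
  simp only [AlgEquiv.smul_def] at hball
  refine ⟨(Finset.Icc (-(r : ℤ)) r).image f, ?_, ?_, ?_, ?_⟩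
  · rw [hball, Finset.coe_image, Finset.coe_Icc]
  · rw [Finset.card_image_of_injective _ hind.injective, Int.card_Icc]
    omega
  · exact hind.to_subtype_range.mono (by simp)
  · rw [hball]
    rintro _ ⟨l, hl, rfl⟩
    have hmem : f l ∈ Algebra.adjoin F (((Finset.Icc (-(r : ℤ)) r).image f : Finset K) : Set K) :=
      Algebra.subset_adjoin (by simpa using ⟨l, hl, rfl⟩)
    exact isAlgebraic_algebraMap (⟨f l, hmem⟩ : Algebra.adjoin F _)
end
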